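/- The set H of real 5×5 matrices of the block form [[A, *, *], [0, det(A), *], [0, 0, det(A)·A]] with A ∈ GL(2,ℝ) (where the starred blocks are arbitrary of sizes 2×1, 2×2, and 1×2 respectively) is a subgroup of GL(5,ℝ). -/
import Mathlib


open Matrix

/-- A 5×5 real matrix (with rows/columns partitioned as 2+1+2) has the Cartan block
form `[[A, *, *], [0, det A, *], [0, 0, det A • A]]` for some invertible 2×2 matrix `A`. -/
def IsCartanBlockForm (M : Matrix ((Fin 2) ⊕ ((Fin 1) ⊕ (Fin 2))) ((Fin 2) ⊕ ((Fin 1) ⊕ (Fin 2))) ℝ) :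
    Prop :=
  ∃ A : Matrix (Fin 2) (Fin 2) ℝ, A.det ≠ 0 ∧
    (∀ i j, M (Sum.inl i) (Sum.inl j) = A i j) ∧
    (∀ i j, M (Sum.inr (Sum.inl i)) (Sum.inl j) = 0) ∧
    (∀ i j, M (Sum.inr (Sum.inr i)) (Sum.inl j) = 0) ∧
    (∀ i j, M (Sum.inr (Sum.inl i)) (Sum.inr (Sum.inl j)) = A.det) ∧
    (∀ i j, M (Sum.inr (Sum.inr i)) (Sum.inr (Sum.inl j)) = 0) ∧
    (∀ i j, M (Sum.inr (Sum.inr i)) (Sum.inr (Sum.inr j)) = A.det * A i j)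

lemma cartan_iff (M : Matrix ((Fin 2) ⊕ ((Fin 1) ⊕ (Fin 2))) ((Fin 2) ⊕ ((Fin 1) ⊕ (Fin 2))) ℝ) :
    IsCartanBlockForm M ↔ ∃ (A : Matrix (Fin 2) (Fin 2) ℝ)
      (B : Matrix (Fin 2) ((Fin 1) ⊕ (Fin 2)) ℝ) (E : Matrix (Fin 1) (Fin 2) ℝ),
      A.det ≠ 0 ∧
      M = fromBlocks A B 0 (fromBlocks (A.det • 1) E 0 (A.det • A)) := by
  constructor
  · rintro ⟨A, hA, h1, h2, h3, h4, h5, h6⟩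
    refine ⟨A, Matrix.of fun i j => M (Sum.inl i) (Sum.inr j),
      Matrix.of fun i j => M (Sum.inr (Sum.inl i)) (Sum.inr (Sum.inr j)), hA, ?_⟩
    ext i j
    rcases i with i | i | i <;> rcases j with j | j | j <;>
      simp [fromBlocks, h1, h2, h3, h4, h5, h6, Matrix.one_apply, Fin.fin_one_eq_zero]
  · rintro ⟨A, B, E, hA, rfl⟩
    exact ⟨A, hA, fun i j => rfl, fun i j => rfl, fun i j => rfl,
      fun i j => by simp [fromBlocks, Matrix.one_apply, Fin.fin_one_eq_zero],
      fun i j => rfl, fun i j => rfl⟩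

theorem stmt_5 :
    ∃ H : Subgroup (Matrix.GeneralLinearGroup ((Fin 2) ⊕ ((Fin 1) ⊕ (Fin 2))) ℝ),
      ∀ M : Matrix.GeneralLinearGroup ((Fin 2) ⊕ ((Fin 1) ⊕ (Fin 2))) ℝ,
        M ∈ H ↔ IsCartanBlockForm (M : Matrix _ _ ℝ) := by
  refine ⟨{ carrier := {M | IsCartanBlockForm (M : Matrix _ _ ℝ)}
            mul_mem' := ?_
            one_mem' := ?_
            inv_mem' := ?_ }, fun M => Iff.rfl⟩
  · rintro a b ha hb
    simp only [Set.mem_setOf_eq, cartan_iff] at *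
    obtain ⟨A, B, E, hA, hMa⟩ := ha
    obtain ⟨A', B', E', hA', hMb⟩ := hb
    refine ⟨A * A', A * B' + B * (fromBlocks (A'.det • 1) E' 0 (A'.det • A')),
      (A.det • (1 : Matrix (Fin 1) (Fin 1) ℝ)) * E' + E * (A'.det • A'), by simp [hA, hA'], ?_⟩
    rw [Units.val_mul, hMa, hMb]
    simp [Matrix.fromBlocks_multiply, Matrix.det_mul, smul_smul, smul_mul_assoc,
      mul_smul_comm]
    rw [mul_comm A'.det]
    exact ⟨rfl, rfl⟩
  · show IsCartanBlockForm _
    rw [Units.val_one, cartan_iff]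
    exact ⟨1, 0, 0, by simp, by simp⟩
  · rintro a ha
    simp only [Set.mem_setOf_eq, cartan_iff] at *
    obtain ⟨A, B, E, hA, hMa⟩ := ha
    have hAu : IsUnit A.det := isUnit_iff_ne_zero.2 hA
    set D := fromBlocks (A.det • (1 : Matrix (Fin 1) (Fin 1) ℝ)) E 0 (A.det • A) with hD
    have hDdet : D.det ≠ 0 := by
      rw [hD, Matrix.det_fromBlocks_zero₂₁]
      simp [Matrix.det_smul, hA]
    have key1 : (A.det • (1 : Matrix (Fin 1) (Fin 1) ℝ)) * (A.det⁻¹ • 1) = 1 := by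
      rw [smul_mul_assoc, mul_smul_comm, smul_smul, mul_inv_cancel₀ hA, one_smul, mul_one]
    have key2 : (A.det • A) * (A.det⁻¹ • A⁻¹) = 1 := by
      rw [smul_mul_assoc, mul_smul_comm, smul_smul, mul_inv_cancel₀ hA, one_smul,
        Matrix.mul_nonsing_inv _ hAu]
    have key3 : A.det⁻¹ • A.det⁻¹ • A.det • (E * A⁻¹) = A.det⁻¹ • (E * A⁻¹) := by
      rw [smul_smul, smul_smul, mul_assoc, inv_mul_cancel₀ hA, mul_one]
    have hDinv : D⁻¹ = fromBlocks (A.det⁻¹ • 1)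
        (-(A.det⁻¹ • (E * (A.det⁻¹ • A⁻¹)))) 0 (A.det⁻¹ • A⁻¹) := by
      apply Matrix.inv_eq_right_inv
      rw [hD, Matrix.fromBlocks_multiply]
      simp [key1, key2, key3]
    have k1 : A * A⁻¹ = 1 := Matrix.mul_nonsing_inv _ hAu
    have k2 : D * D⁻¹ = 1 := Matrix.mul_nonsing_inv _ (isUnit_iff_ne_zero.2 hDdet)
    have k3 : A * (A⁻¹ * B * D⁻¹) = B * D⁻¹ := by
      rw [← Matrix.mul_assoc, ← Matrix.mul_assoc, k1, Matrix.one_mul]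
    have hMinv : (↑a : Matrix _ _ ℝ)⁻¹ = fromBlocks A⁻¹ (-(A⁻¹ * B * D⁻¹)) 0 D⁻¹ := by
      apply Matrix.inv_eq_right_inv
      rw [hMa, Matrix.fromBlocks_multiply]
      simp [k1, k2, k3]
    refine ⟨A⁻¹, -(A⁻¹ * B * D⁻¹), -(A.det⁻¹ • (E * (A.det⁻¹ • A⁻¹))), ?_, ?_⟩
    · simp [Matrix.det_nonsing_inv, Ring.inverse_eq_inv', hA]
    · rw [Matrix.coe_units_inv, hMinv, hDinv]
      simp [Matrix.det_nonsing_inv, Ring.inverse_eq_inv']
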